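/- arXiv:2006.07340 — 2 statements merged into one kernel-verified Lean document; each statement's English description precedes it below -/
import Mathlib

section
/- Let K be an n×n positive semidefinite real matrix with eigenvalues λ_1 ≥ ... ≥ λ_n ≥ 0, and for λ > 0 define the statistical dimension s_λ = Σ_{i=1}^n λ_i/(λ_i + λ). Then the sum of the eigenvalues with index greater than 2⌈s_λ⌉ satisfies Σ_{i = 2⌈s_λ⌉+1}^n λ_i ≤ 2 λ s_λ. -/
open Finset

/-- For a PSD matrix with eigenvalues `μ 0 ≥ μ 1 ≥ ... ≥ μ (n-1) ≥ 0`
(indexed from 1 in the paper) and statistical dimension `s_λ = Σ μ i / (μ i + λ)`,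
the tail sum of eigenvalues with (1-based) index greater than `2⌈s_λ⌉` is at most `2 λ s_λ`. -/
theorem stmt0 (n : ℕ) (μ : Fin n → ℝ)
    (hmono : ∀ i j : Fin n, i ≤ j → μ j ≤ μ i)
    (hnonneg : ∀ i, 0 ≤ μ i)
    (lam : ℝ) (hlam : 0 < lam)
    (slam : ℝ) (hslam : slam = ∑ i, μ i / (μ i + lam)) :
    ∑ i ∈ Finset.univ.filter (fun i : Fin n => 2 * ⌈slam⌉₊ ≤ (i : ℕ)), μ i
      ≤ 2 * lam * slam := by
  have hpos : ∀ i : Fin n, 0 < μ i + lam := fun i => by linarith [hnonneg i]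
  have hr0 : ∀ i : Fin n, 0 ≤ μ i / (μ i + lam) :=
    fun i => div_nonneg (hnonneg i) (hpos i).le
  have hsn : 0 ≤ slam := by
    rw [hslam]; exact Finset.sum_nonneg fun i _ => hr0 i
  -- key: for i in the tail, μ i ≤ lam
  have hkey : ∀ i : Fin n, 2 * ⌈slam⌉₊ ≤ (i : ℕ) → μ i ≤ lam := by
    intro i hi
    by_contra h
    push_neg at h
    have hmonor : ∀ j : Fin n, j ≤ i → μ i / (μ i + lam) ≤ μ j / (μ j + lam) := by
      intro j hj
      rw [div_le_div_iff₀ (hpos i) (hpos j)]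
      have h1 := hmono j i hj
      nlinarith
    have hsum1 : ∑ _j ∈ Finset.Iic i, μ i / (μ i + lam)
        ≤ ∑ j ∈ Finset.Iic i, μ j / (μ j + lam) :=
      Finset.sum_le_sum fun j hj => hmonor j (Finset.mem_Iic.mp hj)
    have hcard : (Finset.Iic i).card = (i : ℕ) + 1 := by
      exact Fin.card_Iic i
    have hsub : ∑ j ∈ Finset.Iic i, μ j / (μ j + lam) ≤ slam := by
      rw [hslam]
      exact Finset.sum_le_sum_of_subset_of_nonneg (Finset.subset_univ _)
        (fun j _ _ => hr0 j)
    rw [Finset.sum_const, hcard, nsmul_eq_mul] at hsum1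
    have hceil : slam ≤ (⌈slam⌉₊ : ℝ) := Nat.le_ceil _
    have hri : (1 : ℝ) / 2 < μ i / (μ i + lam) := by
      rw [div_lt_div_iff₀ (by norm_num) (hpos i)]
      linarith
    have hin : ((2 * ⌈slam⌉₊ : ℕ) : ℝ) ≤ ((i : ℕ) : ℝ) := by exact_mod_cast hi
    push_cast at hin
    push_cast at hsum1
    have hstep : (((i : ℕ) : ℝ) + 1) * (1 / 2) ≤ (((i : ℕ) : ℝ) + 1) * (μ i / (μ i + lam)) :=
      mul_le_mul_of_nonneg_left hri.le (by positivity)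
    linarith
  -- now bound each tail term by 2 λ * ratio
  have hterm : ∀ i : Fin n, 2 * ⌈slam⌉₊ ≤ (i : ℕ) →
      μ i ≤ 2 * lam * (μ i / (μ i + lam)) := by
    intro i hi
    have h1 := hkey i hi
    rw [mul_div_assoc', le_div_iff₀ (hpos i)]
    nlinarith [hnonneg i]
  calc ∑ i ∈ Finset.univ.filter (fun i : Fin n => 2 * ⌈slam⌉₊ ≤ (i : ℕ)), μ i
      ≤ ∑ i ∈ Finset.univ.filter (fun i : Fin n => 2 * ⌈slam⌉₊ ≤ (i : ℕ)),
          2 * lam * (μ i / (μ i + lam)) :=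
        Finset.sum_le_sum fun i hi => hterm i (by simpa using hi)
    _ = 2 * lam * ∑ i ∈ Finset.univ.filter (fun i : Fin n => 2 * ⌈slam⌉₊ ≤ (i : ℕ)),
          μ i / (μ i + lam) := by rw [Finset.mul_sum]
    _ ≤ 2 * lam * slam := by
        apply mul_le_mul_of_nonneg_left _ (by linarith)
        rw [hslam]
        exact Finset.sum_le_sum_of_subset_of_nonneg (Finset.filter_subset _ _)
          (fun j _ _ => hr0 j)
end

section
/- Let g(x) = (1/√π)e^{−x²}. Assume the Ingham-based bound: for every f(x) = Σ_{j=1}^s a_j e^{iλ_jx} with real frequencies of pairwise gap at least γ > 0, (6/γ)Σ_j|a_j|² ≤ ∫_{−2π/γ}^{2π/γ}|f(x)|²dx. Then for all x ∈ ℝ, the leverage score of the gap class satisfies τ_{s,γ,g}(x) ≤ (γ/6)e^{4π²/γ²} · s · e^{−x²}. -/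
/-!
Cauchy–Schwarz bounds `|f(x)|²` by `s ∑ |aⱼ|²` pointwise, while on `[-2π/γ, 2π/γ]` the Gaussian
weight is at least `e^{-4π²/γ²}`, so Ingham's inequality bounds `∑ |aⱼ|²` by
`(γ/6) e^{4π²/γ²} ∫ |f|² e^{-y²}`. The normalisation `1/√π` of the weight cancels in the ratio.
-/

open MeasureTheory Real

noncomputable def expSum {ι : Type*} [Fintype ι] (a : ι → ℂ) (lam : ι → ℝ) (t : ℝ) : ℂ :=
  ∑ j, a j * Complex.exp (Complex.I * (lam j : ℂ) * (t : ℂ))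

section expSum

variable {ι : Type*} [Fintype ι] (a : ι → ℂ) (lam : ι → ℝ)

theorem continuous_expSum : Continuous (expSum a lam) := by
  unfold expSum
  fun_prop

theorem norm_expSum_sq_le (t : ℝ) :
    ‖expSum a lam t‖ ^ 2 ≤ Fintype.card ι * ∑ j, ‖a j‖ ^ 2 := by
  have hterm : ∀ j, ‖a j * Complex.exp (Complex.I * (lam j : ℂ) * (t : ℂ))‖ = ‖a j‖ := by
    intro j
    rw [norm_mul, mul_assoc, ← Complex.ofReal_mul, Complex.norm_exp_I_mul_ofReal, mul_one]
  have htriangle : ‖expSum a lam t‖ ≤ ∑ j, ‖a j‖ :=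
    (norm_sum_le _ _).trans_eq (Finset.sum_congr rfl fun j _ => hterm j)
  calc ‖expSum a lam t‖ ^ 2 ≤ (∑ j, ‖a j‖) ^ 2 := by gcongr
    _ ≤ Fintype.card ι * ∑ j, ‖a j‖ ^ 2 := sq_sum_le_card_mul_sum_sq

end expSum

section GaussianWeight

variable {u : ℝ → ℝ}

theorem integrable_mul_exp_neg_sq_of_bounded (hu : Continuous u) {M : ℝ} (hM : ∀ y, ‖u y‖ ≤ M) :
    Integrable fun y => u y * exp (-y ^ 2) := by
  have hgauss : Integrable fun y : ℝ => exp (-y ^ 2) := by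
    simpa using integrable_exp_neg_mul_sq one_pos
  exact hgauss.bdd_mul hu.aestronglyMeasurable (Filter.Eventually.of_forall hM)

theorem exp_neg_sq_mul_intervalIntegral_le_integral (hu : Continuous u) (hu0 : 0 ≤ u)
    (hint : Integrable fun y => u y * exp (-y ^ 2)) {c : ℝ} (hc : 0 ≤ c) :
    exp (-c ^ 2) * ∫ t in -c..c, u t ≤ ∫ y, u y * exp (-y ^ 2) := by
  rw [intervalIntegral.integral_of_le (by linarith), ← integral_const_mul]
  calc ∫ t in Set.Ioc (-c) c, exp (-c ^ 2) * u t
      ≤ ∫ t in Set.Ioc (-c) c, u t * exp (-t ^ 2) := by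
        refine setIntegral_mono_on (hu.integrableOn_Ioc.const_mul _) hint.integrableOn
          measurableSet_Ioc fun t ht => ?_
        have ht2 : t ^ 2 ≤ c ^ 2 := sq_le_sq' ht.1.le ht.2
        rw [mul_comm]
        gcongr
        exact hu0 t
    _ ≤ ∫ y, u y * exp (-y ^ 2) := setIntegral_le_integral hint (Filter.Eventually.of_forall
        fun y => mul_nonneg (hu0 y) (exp_pos _).le)

end GaussianWeight

theorem div_le_inv_mul_of_le_mul_of_mul_le {N D S B L w : ℝ} (hL : 0 < L) (hS : 0 ≤ S)
    (hB : 0 ≤ B) (hw : 0 ≤ w) (hN : N ≤ B * S * w) (hD : L * S ≤ D) :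
    N / D ≤ L⁻¹ * B * w := by
  rcases (hD.trans' (by positivity) : 0 ≤ D).eq_or_lt with rfl | hDpos
  · rw [div_zero]
    positivity
  rw [div_le_iff₀ hDpos]
  calc N ≤ B * S * w := hN
    _ = L⁻¹ * B * w * (L * S) := by field_simp
    _ ≤ L⁻¹ * B * w * D := by gcongr

theorem stmt7_general (s : ℕ) (γ : ℝ) (hγ : 0 < γ)
    (hIngham : ∀ (a : Fin s → ℂ) (lam : Fin s → ℝ),
      (∀ j k : Fin s, j ≠ k → γ ≤ |lam j - lam k|) →
      (6 / γ) * ∑ j, ‖a j‖ ^ 2 ≤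
        ∫ t in (-(2 * π / γ))..(2 * π / γ),
          ‖∑ j, a j * Complex.exp (Complex.I * (lam j : ℂ) * (t : ℂ))‖ ^ 2)
    (a : Fin s → ℂ) (lam : Fin s → ℝ)
    (hgap : ∀ j k : Fin s, j ≠ k → γ ≤ |lam j - lam k|)
    (f : ℝ → ℂ)
    (hf : ∀ x : ℝ, f x = ∑ j, a j * Complex.exp (Complex.I * (lam j : ℂ) * (x : ℂ)))
    (x : ℝ) :
    ‖f x‖ ^ 2 * ((1 / Real.sqrt π) * Real.exp (-x ^ 2)) /
      (∫ y : ℝ, ‖f y‖ ^ 2 * ((1 / Real.sqrt π) * Real.exp (-y ^ 2)))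
      ≤ (γ / 6) * Real.exp (4 * π ^ 2 / γ ^ 2) * s * Real.exp (-x ^ 2) := by
  obtain rfl : f = expSum a lam := funext hf
  set S := ∑ j, ‖a j‖ ^ 2
  have hbound : ∀ y, ‖expSum a lam y‖ ^ 2 ≤ s * S := by
    simpa using norm_expSum_sq_le a lam
  have hcont : Continuous fun y => ‖expSum a lam y‖ ^ 2 := (continuous_expSum a lam).norm.pow 2
  have hlower : (exp (-(2 * π / γ) ^ 2) * (6 / γ)) * S ≤
      ∫ y, ‖expSum a lam y‖ ^ 2 * exp (-y ^ 2) := by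
    rw [mul_assoc]
    refine (mul_le_mul_of_nonneg_left (hIngham a lam hgap) (exp_pos _).le).trans ?_
    refine exp_neg_sq_mul_intervalIntegral_le_integral hcont (fun y => by positivity)
      (integrable_mul_exp_neg_sq_of_bounded hcont (M := s * S) fun y => ?_) (by positivity)
    simpa using hbound y
  have hweight : (1 / √π) ≠ 0 := by positivity
  simp_rw [mul_left_comm _ (1 / √π), integral_const_mul, mul_div_mul_left _ _ hweight]
  refine (div_le_inv_mul_of_le_mul_of_mul_le (by positivity) (by positivity) (by positivity)
    (exp_pos (-x ^ 2)).le (mul_le_mul_of_nonneg_right (hbound x) (exp_pos _).le) hlower).trans_eq ?_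
  rw [mul_inv, ← exp_neg, neg_neg, inv_div]
  ring_nf

/-- Gaussian leverage bound for the gap class `T_{s,γ}`. -/
theorem stmt7 (s : ℕ) (γ : ℝ) (hγ : 0 < γ)
    (hIngham : ∀ (a : Fin s → ℂ) (lam : Fin s → ℝ),
      (∀ j k : Fin s, j ≠ k → γ ≤ |lam j - lam k|) →
      (6 / γ) * ∑ j, ‖a j‖ ^ 2 ≤
        ∫ t in (-(2 * π / γ))..(2 * π / γ),
          ‖∑ j, a j * Complex.exp (Complex.I * (lam j : ℂ) * (t : ℂ))‖ ^ 2)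
    (a : Fin s → ℂ) (lam : Fin s → ℝ)
    (hgap : ∀ j k : Fin s, j ≠ k → γ ≤ |lam j - lam k|)
    (f : ℝ → ℂ)
    (hf : ∀ x : ℝ, f x = ∑ j, a j * Complex.exp (Complex.I * (lam j : ℂ) * (x : ℂ)))
    (hf0 : f ≠ 0) (x : ℝ) :
    ‖f x‖ ^ 2 * ((1 / Real.sqrt π) * Real.exp (-x ^ 2)) /
      (∫ y : ℝ, ‖f y‖ ^ 2 * ((1 / Real.sqrt π) * Real.exp (-y ^ 2)))
      ≤ (γ / 6) * Real.exp (4 * π ^ 2 / γ ^ 2) * s * Real.exp (-x ^ 2) :=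
  stmt7_general s γ hγ hIngham a lam hgap f hf x
end
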